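/- Let G be a set of edges of the complete graph on a finite vertex set V, and let H = ⟨G⟩_{K_4} be its K_4-bootstrap closure. Then: (i) if A, B ⊆ V are cliques of H (i.e. all edges inside A, respectively inside B, belong to H) with |A ∩ B| ≥ 2, then A ∪ B is a clique of H; and (ii) if A, B, C ⊆ V are cliques of H and there exist distinct vertices u, v, w with u ∈ A ∩ B, v ∈ B ∩ C and w ∈ A ∩ C, then A ∪ B ∪ C is a clique of H. Consequently ⟨G⟩_{K_4} consists of a triangle-free collection of edge-disjoint cliques. -/

import Mathlib

open Finset

/-- The edge set of the copy of `H` under the injection `f`. -/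
def copyEdges {W V : Type*} (H : SimpleGraph W) (f : W ↪ V) : Set (Sym2 V) :=
  Sym2.map f '' H.edgeSet

/-- One step of the `H`-bootstrap process: infect every edge `e` for which some copy of `H`
contains `e` and has all its other edges already infected. -/
def bootStep {W V : Type*} (H : SimpleGraph W) (E : Set (Sym2 V)) : Set (Sym2 V) :=
  E ∪ {e | ∃ f : W ↪ V, e ∈ copyEdges H f ∧ copyEdges H f ⊆ insert e E}

/-- The closure of `E` under the `H`-bootstrap process. -/
def bootClosure {W V : Type*} (H : SimpleGraph W) (E : Set (Sym2 V)) : Set (Sym2 V) :=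
  ⋃ t, (bootStep H)^[t] E

/-- `E` percolates in the `H`-bootstrap process on the complete graph on `V`. -/
def Percolates {W V : Type*} (H : SimpleGraph W) (E : Set (Sym2 V)) : Prop :=
  bootClosure H E = (⊤ : SimpleGraph V).edgeSet

/-- The expectation of `X` under the Erdős–Rényi random graph `G_{n,p}`,
written as a sum over all graphs on `[n]`, weighted by their probabilities. -/
noncomputable def gnpExp (n : ℕ) (p : ℝ) (X : Finset (Sym2 (Fin n)) → ℝ) : ℝ :=
  ∑ E ∈ (⊤ : SimpleGraph (Fin n)).edgeFinset.powerset,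
    p ^ E.card * (1 - p) ^ ((⊤ : SimpleGraph (Fin n)).edgeFinset.card - E.card) * X E

/- probability of event `A` under `G_{n,p}` -/
open Classical in
noncomputable def gnpProb (n : ℕ) (p : ℝ) (A : Finset (Sym2 (Fin n)) → Prop) : ℝ :=
  gnpExp n p (fun E => if A E then 1 else 0)

/-- The critical probability for `H`-bootstrap percolation on `K_n`. -/
noncomputable def pc {W : Type*} (n : ℕ) (H : SimpleGraph W) : ℝ :=
  sInf {p : ℝ | p ∈ Set.Icc (0 : ℝ) 1 ∧
    1 / 2 ≤ gnpProb n p (fun E => Percolates H (↑E : Set (Sym2 (Fin n))))}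

/-- `λ(r) = (C(r,2) - 2)/(r - 2)`. -/
noncomputable def lam (r : ℕ) : ℝ := ((r.choose 2 : ℝ) - 2) / ((r : ℝ) - 2)

/-! Every edge that completes a copy of `K₄` whose other five edges lie in `⟨G⟩_{K₄}` is itself in
`⟨G⟩_{K₄}`: the five edges are all present at some finite stage of the process, and the sixth is
added at the next one. In a graph with this property, if cliques `A` and `B` share two vertices
`x ≠ y`, then for `u ∈ A`, `v ∈ B` outside `{x, y}` all edges of `{u, v, x, y}` except `uv` are
present, so `uv` is an edge too. For three pairwise meeting cliques, the triangle `uvw` is a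
clique sharing two vertices with each of `A`, `B`, `C`, and gluing along it gives the claim. -/

section Bootstrap

variable {W V : Type*} (H : SimpleGraph W) (E : Set (Sym2 V))

lemma monotone_iterate_bootStep : Monotone fun t => (bootStep H)^[t] E :=
  monotone_nat_of_le_succ fun t => by
    rw [Function.iterate_succ_apply']
    exact Set.subset_union_left

lemma mem_bootClosure_of_copyEdges_subset [Finite W] {f : W ↪ V} {e : Sym2 V}
    (he : e ∈ copyEdges H f) (hsub : copyEdges H f ⊆ insert e (bootClosure H E)) :
    e ∈ bootClosure H E := by
  have hfin : (copyEdges H f \ {e}).Finite := (H.edgeSet.toFinite.image _).sdiff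
  obtain ⟨t, ht⟩ := (monotone_iterate_bootStep H E).directed_le
    |>.exists_mem_subset_of_finset_subset_biUnion (s := hfin.toFinset) (by
      simpa [Set.sdiff_subset_iff, bootClosure] using hsub)
  refine Set.mem_iUnion.2 ⟨t + 1, ?_⟩
  rw [Function.iterate_succ_apply']
  refine Or.inr ⟨f, he, ?_⟩
  simpa [Set.sdiff_subset_iff] using ht

end Bootstrap

namespace SimpleGraph

variable {V : Type*}

def IsK4Closed (K : SimpleGraph V) : Prop :=
  ∀ ⦃a b c d⦄, K.Adj a c → K.Adj a d → K.Adj b c → K.Adj b d → K.Adj c d → a ≠ b → K.Adj a b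

lemma isK4Closed_fromEdgeSet_bootClosure (G : Set (Sym2 V)) :
    (fromEdgeSet (bootClosure (completeGraph (Fin 4)) G)).IsK4Closed := by
  intro a b c d hac had hbc hbd hcd hab
  simp only [fromEdgeSet_adj] at *
  refine ⟨?_, hab⟩
  have hinj : Function.Injective ![a, b, c, d] := by
    intro i j
    fin_cases i <;> fin_cases j <;> simp_all [eq_comm]
  let f : Fin 4 ↪ V := ⟨![a, b, c, d], hinj⟩
  refine mem_bootClosure_of_copyEdges_subset _ _ (f := f) ⟨s(0, 1), by simp, rfl⟩ ?_
  rintro _ ⟨x, hx, rfl⟩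
  induction x using Sym2.ind with
  | _ i j =>
    fin_cases i <;> fin_cases j <;> simp_all [f, Sym2.eq_swap]

end SimpleGraph

namespace SimpleGraph.IsK4Closed

variable {V : Type*} {K : SimpleGraph V} {A B C : Set V} {x y : V}

lemma adj_of_mem_of_mem (hK : K.IsK4Closed) (hA : K.IsClique A) (hB : K.IsClique B)
    (hx : x ∈ A ∩ B) (hy : y ∈ A ∩ B) (hxy : x ≠ y) {u v : V} (hu : u ∈ A) (hv : v ∈ B)
    (huv : u ≠ v) : K.Adj u v := by
  by_cases hux : u = x
  · exact hB (hux ▸ hx.2) hv huv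
  by_cases huy : u = y
  · exact hB (huy ▸ hy.2) hv huv
  by_cases hvx : v = x
  · exact hA hu (hvx ▸ hx.1) huv
  by_cases hvy : v = y
  · exact hA hu (hvy ▸ hy.1) huv
  exact hK (hA hu hx.1 hux) (hA hu hy.1 huy) (hB hv hx.2 hvx) (hB hv hy.2 hvy)
    (hA hx.1 hy.1 hxy) huv

lemma isClique_union (hK : K.IsK4Closed) (hA : K.IsClique A) (hB : K.IsClique B)
    (hx : x ∈ A ∩ B) (hy : y ∈ A ∩ B) (hxy : x ≠ y) : K.IsClique (A ∪ B) :=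
  Set.pairwise_union.2 ⟨hA, hB, fun _ hu _ hv huv =>
    have hadj := hK.adj_of_mem_of_mem hA hB hx hy hxy hu hv huv
    ⟨hadj, hadj.symm⟩⟩

lemma isClique_union_union (hK : K.IsK4Closed) (hA : K.IsClique A) (hB : K.IsClique B)
    (hC : K.IsClique C) {u v w : V} (huv : u ≠ v) (hvw : v ≠ w) (huw : u ≠ w)
    (hu : u ∈ A ∩ B) (hv : v ∈ B ∩ C) (hw : w ∈ A ∩ C) : K.IsClique (A ∪ B ∪ C) := by
  have hT : K.IsClique {u, v, w} := by
    simp [isClique_insert, huv, hvw, huw, hB hu.2 hv.1 huv, hC hv.2 hw.2 hvw, hA hu.1 hw.1 huw]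
  have hAT : K.IsClique (A ∪ {u, v, w}) :=
    hK.isClique_union hA hT (by simp [hu.1]) (by simp [hw.1]) huw
  have hATB : K.IsClique (A ∪ {u, v, w} ∪ B) :=
    hK.isClique_union hAT hB (by simp [hu.2]) (by simp [hv.1]) huv
  have hATBC : K.IsClique (A ∪ {u, v, w} ∪ B ∪ C) :=
    hK.isClique_union hATB hC (by simp [hv.2]) (by simp [hw.2]) hvw
  exact hATBC.subset fun z hz => by simp only [Set.mem_union] at hz ⊢; tauto

end SimpleGraph.IsK4Closed

theorem K4_closure_cliques {V : Type*} (G : Set (Sym2 V))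
    (IsCl : Set V → Prop)
    (hIsCl : ∀ A : Set V, IsCl A ↔ ∀ u ∈ A, ∀ v ∈ A, u ≠ v →
      s(u, v) ∈ bootClosure (SimpleGraph.completeGraph (Fin 4)) G) :
    (∀ A B : Set V, IsCl A → IsCl B → 2 ≤ (A ∩ B).ncard → IsCl (A ∪ B)) ∧
    (∀ A B C : Set V, IsCl A → IsCl B → IsCl C →
      (∃ u v w : V, u ≠ v ∧ v ≠ w ∧ u ≠ w ∧ u ∈ A ∩ B ∧ v ∈ B ∩ C ∧ w ∈ A ∩ C) →
      IsCl (A ∪ B ∪ C)) := by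
  set K := SimpleGraph.fromEdgeSet (bootClosure (SimpleGraph.completeGraph (Fin 4)) G)
  have hK : K.IsK4Closed := SimpleGraph.isK4Closed_fromEdgeSet_bootClosure G
  have hIsCl_iff : ∀ A, IsCl A ↔ K.IsClique A := fun A => by
    simp only [hIsCl, SimpleGraph.isClique_iff, Set.Pairwise, K, SimpleGraph.fromEdgeSet_adj]
    exact forall₂_congr fun _ _ => forall₂_congr fun _ _ => by tauto
  simp only [hIsCl_iff]
  refine ⟨fun A B hA hB hAB => ?_, fun A B C hA hB hC ⟨u, v, w, huv, hvw, huw, hu, hv, hw⟩ =>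
    hK.isClique_union_union hA hB hC huv hvw huw hu hv hw⟩
  obtain ⟨x, y, hx, hy, hxy⟩ :=
    (Set.one_lt_ncard_iff (Set.finite_of_ncard_pos (by omega))).1 hAB
  exact hK.isClique_union hA hB hx hy hxy
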